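/- For r ≥ 3 and 2 ≤ n ≤ r − 1, R_3(nK_r) ≥ (r−1)(R_2(K_r) − 1) + n: there is a 3-edge-coloring of the complete graph on (r−1)(R_2(K_r)−1) + n − 1 vertices with no monochromatic copy of n disjoint K_r's. -/

import Mathlib

/-!
Take `r - 1` disjoint copies of a red/blue colouring of `K_{R₂(K_r) - 1}` without a monochromatic
`K_r`, add a clique on `n - 1` further vertices and colour every remaining edge green (colour `2`).
A red or blue `K_r` lies inside one copy, and a green `K_r` meets each copy at most once, so it has
a vertex among the `n - 1` extra ones: there is no monochromatic `nK_r`.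

The lower bound on `R₃(nK_r)` also needs this Ramsey number to be finite, by the greedy proof
of Ramsey's theorem: among `(k + 1) ^ s` vertices of a `k`-coloured complete graph one finds `s`
vertices such that the colour of each edge between them depends only on its earlier endpoint, and
pigeonhole on these colours gives a monochromatic clique.
-/

open SimpleGraph

/-- A rainbow path on `ℓ` vertices in an edge coloring `c` of the complete graph on `Fin n`:
an injective sequence of `ℓ` vertices whose `ℓ - 1` consecutive edges get pairwise
distinct colors. -/
def hasRainbowPath (ℓ : ℕ) {n : ℕ} {α : Type*} (c : Sym2 (Fin n) → α) : Prop :=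
  ∃ f : Fin ℓ ↪ Fin n, Function.Injective (fun i : Fin (ℓ - 1) =>
    c s(f ⟨i.1, by have := i.2; omega⟩, f ⟨i.1 + 1, by have := i.2; omega⟩))

/-- A copy of the graph `H` all of whose edges receive the color `i`. -/
def hasCopyInColor {V : Type*} (H : SimpleGraph V) {n : ℕ} {α : Type*}
    (c : Sym2 (Fin n) → α) (i : α) : Prop :=
  ∃ f : V ↪ Fin n, ∀ u v, H.Adj u v → c s(f u, f v) = i

/-- A monochromatic copy of the graph `H`. -/
def hasMonoCopy {V : Type*} (H : SimpleGraph V) {n : ℕ} {α : Type*}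
    (c : Sym2 (Fin n) → α) : Prop :=
  ∃ i, hasCopyInColor H c i

/-- The graph formed by the edges of color `i`. -/
def colorGraph {n : ℕ} {α : Type*} (c : Sym2 (Fin n) → α) (i : α) : SimpleGraph (Fin n) :=
  SimpleGraph.fromEdgeSet {e | c e = i ∧ ¬ e.IsDiag}

/-- A copy, in color `i`, of some connected graph containing `H` as a subgraph:
equivalently, a copy of `H` in color `i` whose vertices all lie in a single
connected component of the graph of color-`i` edges. -/
def hasConnCopyInColor {V : Type*} (H : SimpleGraph V) {n : ℕ} {α : Type*}
    (c : Sym2 (Fin n) → α) (i : α) : Prop :=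
  ∃ f : V ↪ Fin n, (∀ u v, H.Adj u v → c s(f u, f v) = i) ∧
    ∀ u v, (colorGraph c i).Reachable (f u) (f v)

/-- A monochromatic copy of some connected graph containing `H` as a subgraph. -/
def hasMonoConnCopy {V : Type*} (H : SimpleGraph V) {n : ℕ} {α : Type*}
    (c : Sym2 (Fin n) → α) : Prop :=
  ∃ i, hasConnCopyInColor H c i

/-- The `k`-color Ramsey number `R_k(H)`. -/
noncomputable def ramsey {V : Type*} (H : SimpleGraph V) (k : ℕ) : ℕ :=
  sInf {n | ∀ c : Sym2 (Fin n) → Fin k, hasMonoCopy H c}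

/-- The asymmetric two-color Ramsey number `R(F, G)`. -/
noncomputable def ramseyPair {V W : Type*} (F : SimpleGraph V) (G : SimpleGraph W) : ℕ :=
  sInf {n | ∀ c : Sym2 (Fin n) → Fin 2, hasCopyInColor F c 0 ∨ hasCopyInColor G c 1}

/-- `R_2(𝒞(H))`, the two-color Ramsey number of the family of connected graphs
containing `H` as a subgraph. -/
noncomputable def ramseyConn {V : Type*} (H : SimpleGraph V) : ℕ :=
  sInf {n | ∀ c : Sym2 (Fin n) → Fin 2, hasMonoConnCopy H c}

/-- `R(𝒞(F), G)`, the asymmetric Ramsey number: red member of the family of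
connected graphs containing `F`, versus blue copy of `G`. -/
noncomputable def ramseyConnPair {V W : Type*} (F : SimpleGraph V) (G : SimpleGraph W) : ℕ :=
  sInf {n | ∀ c : Sym2 (Fin n) → Fin 2, hasConnCopyInColor F c 0 ∨ hasCopyInColor G c 1}

/-- The Gallai-Ramsey number `gr_k(P_ℓ : H)`: least `n` such that every `k`-coloring of
the edges of `K_n` contains a rainbow path on `ℓ` vertices or a monochromatic copy of `H`. -/
noncomputable def gallaiRamsey (ℓ : ℕ) {V : Type*} (H : SimpleGraph V) (k : ℕ) : ℕ :=
  sInf {n | ∀ c : Sym2 (Fin n) → Fin k, hasRainbowPath ℓ c ∨ hasMonoCopy H c}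

/-- `m` vertex-disjoint copies of `H`. -/
def nCopies (m : ℕ) {V : Type*} (H : SimpleGraph V) : SimpleGraph (Fin m × V) where
  Adj a b := a.1 = b.1 ∧ H.Adj a.2 b.2
  symm := ⟨by rintro a b ⟨h1, h2⟩; exact ⟨h1.symm, h2.symm⟩⟩
  loopless := ⟨by rintro a ⟨-, h⟩; exact h.ne rfl⟩

/-- `s(G)` with respect to `r` colors: the minimum size of a color class over all
proper vertex colorings of `G` with `r` colors. -/
noncomputable def minClass {V : Type*} (G : SimpleGraph V) (r : ℕ) : ℕ :=
  sInf {n | ∃ (C : G.Coloring (Fin r)) (i : Fin r), n = Nat.card {v : V | C v = i}}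

open Finset

section Ramsey

variable {V κ : Type*} [DecidableEq V] [Fintype κ] [Nonempty κ]

theorem exists_injective_seq_forall_lt_color_eq (c : Sym2 V → κ) (s : ℕ) (S : Finset V)
    (hS : (Fintype.card κ + 1) ^ s ≤ #S) :
    ∃ (g : Fin s → V) (χ : Fin s → κ), Function.Injective g ∧ (∀ i, g i ∈ S) ∧
      ∀ i j, i < j → c s(g i, g j) = χ i := by
  classical
  induction s generalizing S with
  | zero => exact ⟨Fin.elim0, Fin.elim0, fun i => i.elim0, fun i => i.elim0, fun i => i.elim0⟩
  | succ s ih =>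
    obtain ⟨v, hv⟩ : S.Nonempty := card_pos.mp (lt_of_lt_of_le (by positivity) hS)
    have hT : #(univ : Finset κ) * (Fintype.card κ + 1) ^ s ≤ #(S.erase v) := by
      rw [card_erase_of_mem hv, card_univ]
      rw [pow_succ, mul_comm, add_one_mul] at hS
      have := Nat.one_le_pow s (Fintype.card κ + 1) (by omega)
      omega
    obtain ⟨i, -, hi⟩ := exists_le_card_fiber_of_mul_le_card_of_maps_to
      (fun x _ => mem_univ (c s(v, x))) univ_nonempty hT
    obtain ⟨g, χ, hg, hgS, hgχ⟩ := ih _ hi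
    have hgT (j : Fin s) : g j ∈ S.erase v ∧ c s(v, g j) = i := mem_filter.mp (hgS j)
    refine ⟨Fin.cons v g, Fin.cons i χ, ?_, ?_, ?_⟩
    · refine Fin.cons_injective_iff.mpr ⟨?_, hg⟩
      rintro ⟨j, hj⟩
      exact (mem_erase.mp (hgT j).1).1 hj
    · exact Fin.cases hv fun j => mem_of_mem_erase (hgT j).1
    · intro j k hjk
      obtain ⟨k, rfl⟩ := Fin.exists_succ_eq.mpr (Fin.ne_zero_of_lt hjk)
      cases j using Fin.cases with
      | zero => simpa using (hgT k).2
      | succ j => simpa using hgχ j k (Fin.succ_lt_succ_iff.mp hjk)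

theorem exists_forall_hasMonoCopy {W : Type*} [Fintype W] (H : SimpleGraph W) (κ : Type*)
    [Fintype κ] [Nonempty κ] : ∃ M, ∀ c : Sym2 (Fin M) → κ, hasMonoCopy H c := by
  classical
  refine ⟨(Fintype.card κ + 1) ^ (Fintype.card κ * Fintype.card W), fun c => ?_⟩
  obtain ⟨g, χ, hg, -, hgχ⟩ :=
    exists_injective_seq_forall_lt_color_eq c (Fintype.card κ * Fintype.card W) univ (by simp)
  obtain ⟨i, hi⟩ :=
    Fintype.exists_le_card_fiber_of_mul_le_card χ (n := Fintype.card W) (by simp)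
  obtain ⟨B, hBi, hB⟩ := exists_subset_card_eq hi
  let e := (Fintype.equivFin W).toEmbedding.trans (B.orderEmbOfFin hB).toEmbedding
  have he (u : W) : χ (e u) = i := (mem_filter.mp (hBi (B.orderEmbOfFin_mem hB _))).2
  refine ⟨i, e.trans ⟨g, hg⟩, fun u v huv => ?_⟩
  rcases lt_or_gt_of_ne (e.injective.ne huv.ne) with h | h
  · exact (hgχ _ _ h).trans (he u)
  · exact (Sym2.eq_swap ▸ hgχ _ _ h).trans (he v)

end Ramsey

section RamseyNumber

variable {V : Type*} (H : SimpleGraph V)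

theorem hasMonoCopy_of_le {a b k : ℕ} (hab : a ≤ b)
    (ha : ∀ c : Sym2 (Fin a) → Fin k, hasMonoCopy H c) (c : Sym2 (Fin b) → Fin k) :
    hasMonoCopy H c := by
  obtain ⟨i, f, hf⟩ := ha (c ∘ Sym2.map (Fin.castLE hab))
  exact ⟨i, f.trans (Fin.castLEEmb hab), fun u v huv => by simpa using hf u v huv⟩

theorem lt_ramsey_of_not_hasMonoCopy [Fintype V] {k m : ℕ} [NeZero k]
    (c : Sym2 (Fin m) → Fin k) (hc : ¬ hasMonoCopy H c) : m < ramsey H k := by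
  by_contra! hle
  exact hc (hasMonoCopy_of_le H hle (Nat.sInf_mem (exists_forall_hasMonoCopy H (Fin k))) c)

theorem exists_not_hasMonoCopy_ramsey_sub_one [Nonempty V] (k : ℕ) [NeZero k] :
    ∃ c : Sym2 (Fin (ramsey H k - 1)) → Fin k, ¬ hasMonoCopy H c := by
  by_contra! h
  have hle : ramsey H k ≤ ramsey H k - 1 := Nat.sInf_le h
  obtain ⟨-, f, -⟩ := h fun _ => 0
  have := (f (Classical.arbitrary V)).isLt
  omega

end RamseyNumber

section BlockColoring

variable {ι G : Type*} [DecidableEq ι] {m : ℕ} (c₀ : Sym2 (Fin m) → Fin 2)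

def blockColor : (ι × Fin m) ⊕ G → (ι × Fin m) ⊕ G → Fin 3
  | .inl (a, x), .inl (b, y) => if a = b then (c₀ s(x, y)).castSucc else 2
  | _, _ => 2

theorem blockColor_comm (p q : (ι × Fin m) ⊕ G) :
    blockColor c₀ p q = blockColor c₀ q p := by
  rcases p with ⟨a, x⟩ | g <;> rcases q with ⟨b, y⟩ | h <;>
    simp [blockColor, eq_comm, Sym2.eq_swap]

def blockColoring : Sym2 ((ι × Fin m) ⊕ G) → Fin 3 :=
  Sym2.lift ⟨blockColor c₀, blockColor_comm c₀⟩

@[simp]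
theorem blockColoring_inl_inl (p q : ι × Fin m) :
    blockColoring (G := G) c₀ s(.inl p, .inl q) =
      if p.1 = q.1 then (c₀ s(p.2, q.2)).castSucc else 2 := rfl

@[simp]
theorem blockColoring_inr_left (g : G) (p : (ι × Fin m) ⊕ G) :
    blockColoring c₀ s(.inr g, p) = 2 := by
  rcases p with ⟨a, x⟩ | h <;> rfl

@[simp]
theorem blockColoring_inr_right (g : G) (p : (ι × Fin m) ⊕ G) :
    blockColoring c₀ s(p, .inr g) = 2 := by
  rw [Sym2.eq_swap, blockColoring_inr_left]

variable {V : Type*}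

theorem exists_inr_of_blockColoring_eq_two [Fintype V] [Fintype ι]
    (hι : Fintype.card ι < Fintype.card V) (f : V ↪ (ι × Fin m) ⊕ G)
    (hf : ∀ u v, u ≠ v → blockColoring c₀ s(f u, f v) = 2) : ∃ u g, f u = .inr g := by
  by_contra! hinl
  have hblock (u : V) : ∃ p, f u = .inl p := by
    cases h : f u with
    | inl p => exact ⟨p, rfl⟩
    | inr g => exact absurd h (hinl u g)
  choose p hp using hblock
  obtain ⟨u, v, huv, hsame⟩ := Fintype.exists_ne_map_eq_of_card_lt (fun u => (p u).1) hι
  have := hf u v huv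
  rw [hp, hp, blockColoring_inl_inl, if_pos hsame] at this
  exact Fin.castSucc_ne_last _ this

theorem not_forall_blockColoring_eq_castSucc [Nontrivial V] {i : Fin 2}
    (hc₀ : ¬ hasCopyInColor (⊤ : SimpleGraph V) c₀ i) (f : V ↪ (ι × Fin m) ⊕ G) :
    ¬ ∀ u v, u ≠ v → blockColoring c₀ s(f u, f v) = i.castSucc := by
  intro hf
  have hblock (u : V) : ∃ p, f u = .inl p := by
    obtain ⟨v, hv⟩ := exists_ne u
    cases h : f u with
    | inl p => exact ⟨p, rfl⟩
    | inr g =>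
      have := hf u v hv.symm
      rw [h, blockColoring_inr_left] at this
      exact absurd this.symm (Fin.castSucc_ne_last i)
  choose p hp using hblock
  have hcol (u v : V) (huv : u ≠ v) : (p u).1 = (p v).1 ∧ c₀ s((p u).2, (p v).2) = i := by
    have := hf u v huv
    rw [hp, hp, blockColoring_inl_inl] at this
    split_ifs at this with h
    · exact ⟨h, Fin.castSucc_injective _ this⟩
    · exact absurd this.symm (Fin.castSucc_ne_last i)
  refine hc₀ ⟨⟨fun u => (p u).2, fun u v huv => ?_⟩, fun u v huv => (hcol u v huv).2⟩
  by_contra hne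
  exact hne (f.injective (by rw [hp, hp, Prod.ext (hcol u v hne).1 huv]))

theorem not_forall_nCopies_blockColoring_eq [Fintype V] [Nontrivial V] [Fintype ι] [Fintype G]
    {n : ℕ} (hι : Fintype.card ι < Fintype.card V) (hG : Fintype.card G < n)
    (hc₀ : ¬ hasMonoCopy (⊤ : SimpleGraph V) c₀) (i : Fin 3)
    (f : Fin n × V ↪ (ι × Fin m) ⊕ G) :
    ¬ ∀ p q, (nCopies n ⊤).Adj p q → blockColoring c₀ s(f p, f q) = i := by
  intro hf
  have hcopy (a : Fin n) (u v : V) (huv : u ≠ v) :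
      blockColoring c₀ s(((Function.Embedding.sectR a V).trans f) u,
        ((Function.Embedding.sectR a V).trans f) v) = i :=
    hf _ _ ⟨rfl, huv⟩
  induction i using Fin.lastCases with
  | last =>
    choose u g hg using fun a => exists_inr_of_blockColoring_eq_two c₀ hι _ (hcopy a)
    have hg_inj : Function.Injective g := fun a b hab => by
      have : (a, u a) = (b, u b) := f.injective ((hg a).trans (hab ▸ (hg b).symm))
      exact congrArg Prod.fst this
    simpa using (Fintype.card_le_of_injective g hg_inj).trans_lt hG
  | cast j =>
    exact not_forall_blockColoring_eq_castSucc c₀ (fun h => hc₀ ⟨j, h⟩) _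
      (hcopy ⟨0, by omega⟩)

end BlockColoring

theorem exists_not_hasMonoCopy_nCopies {r n m : ℕ} (hr : 2 ≤ r) (hn : 1 ≤ n)
    {c₀ : Sym2 (Fin m) → Fin 2} (hc₀ : ¬ hasMonoCopy (⊤ : SimpleGraph (Fin r)) c₀) :
    ∃ c : Sym2 (Fin ((r - 1) * m + n - 1)) → Fin 3,
      ¬ hasMonoCopy (nCopies n (⊤ : SimpleGraph (Fin r))) c := by
  have : Nontrivial (Fin r) := Fin.nontrivial_iff_two_le.mpr hr
  let e : Fin ((r - 1) * m + n - 1) ≃ (Fin (r - 1) × Fin m) ⊕ Fin (n - 1) :=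
    (finCongr (by omega)).trans <| finSumFinEquiv.symm.trans <|
      Equiv.sumCongr finProdFinEquiv.symm (Equiv.refl _)
  refine ⟨blockColoring c₀ ∘ Sym2.map e, fun ⟨i, f, hf⟩ => ?_⟩
  have hι : Fintype.card (Fin (r - 1)) < Fintype.card (Fin r) := by
    simp only [Fintype.card_fin]; omega
  have hG : Fintype.card (Fin (n - 1)) < n := by simp only [Fintype.card_fin]; omega
  exact not_forall_nCopies_blockColoring_eq c₀ hι hG hc₀ i (f.trans e.toEmbedding)
    fun p q hpq => by simpa using hf p q hpq

theorem stmt13_general (r n : ℕ) (hr : 3 ≤ r) (hn : 2 ≤ n) :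
    (r - 1) * (ramsey (⊤ : SimpleGraph (Fin r)) 2 - 1) + n ≤
      ramsey (nCopies n (⊤ : SimpleGraph (Fin r))) 3 ∧
    ∃ c : Sym2 (Fin ((r - 1) * (ramsey (⊤ : SimpleGraph (Fin r)) 2 - 1) + n - 1)) → Fin 3,
      ¬ hasMonoCopy (nCopies n (⊤ : SimpleGraph (Fin r))) c := by
  have : NeZero r := ⟨by omega⟩
  obtain ⟨c₀, hc₀⟩ := exists_not_hasMonoCopy_ramsey_sub_one (⊤ : SimpleGraph (Fin r)) 2
  obtain ⟨c, hc⟩ := exists_not_hasMonoCopy_nCopies (n := n) (by omega) (by omega) hc₀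
  have := lt_ramsey_of_not_hasMonoCopy _ c hc
  exact ⟨by omega, c, hc⟩

/-- For `r ≥ 3` and `2 ≤ n ≤ r − 1`, `R₃(nK_r) ≥ (r−1)(R₂(K_r) − 1) + n`: there is a
3-coloring of the complete graph on `(r−1)(R₂(K_r)−1) + n − 1` vertices with no
monochromatic `nK_r`. -/
theorem stmt13 (r n : ℕ) (hr : 3 ≤ r) (hn : 2 ≤ n) (hnr : n ≤ r - 1) :
    (r - 1) * (ramsey (⊤ : SimpleGraph (Fin r)) 2 - 1) + n ≤
      ramsey (nCopies n (⊤ : SimpleGraph (Fin r))) 3 ∧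
    ∃ c : Sym2 (Fin ((r - 1) * (ramsey (⊤ : SimpleGraph (Fin r)) 2 - 1) + n - 1)) → Fin 3,
      ¬ hasMonoCopy (nCopies n (⊤ : SimpleGraph (Fin r))) c :=
  stmt13_general r n hr hn
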